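/- arXiv:2404.06656 — 9 statements merged into one kernel-verified Lean document; each statement's English description precedes it below -/
import Mathlib

section
/- Let x be a natural number with rev(x) < x, let L be the number of base-10 digits of x, and let y = x − rev(x). Then 99 divides the Ball number Ball(x) = y + revPad(L, y). -/
/-- Digit reversal of a natural number in base 10. -/
def rev (m : ℕ) : ℕ := Nat.ofDigits 10 ((Nat.digits 10 m).reverse)

/-- Reversal of `y` padded with zeros up to length `L`. -/
def revPad (L y : ℕ) : ℕ :=
  Nat.ofDigits 10 ((Nat.digits 10 y ++ List.replicate (L - (Nat.digits 10 y).length) 0).reverse)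

/-- Ball number generated by `x` (meaningful when `rev x < x`). -/
def ball (x : ℕ) : ℕ :=
  (x - rev x) + revPad ((Nat.digits 10 x).length) (x - rev x)

/-- `B` is a Ball magic number. -/
def IsBallMagic (B : ℕ) : Prop := ∃ x : ℕ, rev x < x ∧ ball x = B

lemma ofDigits_cons' {R : Type*} [Semiring R] (b : R) (a : ℕ) (t : List ℕ) :
    Nat.ofDigits b (a :: t) = (a : R) + b * Nat.ofDigits b t := rfl

lemma ofDigits_nil' {R : Type*} [Semiring R] (b : R) : Nat.ofDigits b [] = 0 := rfl

lemma ofDigits_append' {R : Type*} [CommSemiring R] (b : R) (l1 l2 : List ℕ) :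
    Nat.ofDigits b (l1 ++ l2) = Nat.ofDigits b l1 + b ^ l1.length * Nat.ofDigits b l2 := by
  induction l1 with
  | nil => simp [Nat.ofDigits]
  | cons hd tl IH =>
      rw [List.cons_append, ofDigits_cons', ofDigits_cons', IH, List.length_cons, pow_succ']
      ring

lemma ofDigits_replicate_zero {R : Type*} [Semiring R] (b : R) (k : ℕ) :
    Nat.ofDigits b (List.replicate k 0) = 0 := by
  induction k with
  | zero => rfl
  | succ n ih => rw [List.replicate_succ, ofDigits_cons', ih]; simp

lemma ofDigits_one' {R : Type*} [Semiring R] (l : List ℕ) :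
    Nat.ofDigits (1 : R) l = (l.sum : R) := by
  induction l with
  | nil => simp [Nat.ofDigits]
  | cons a t ih => rw [ofDigits_cons', ih, List.sum_cons, Nat.cast_add, one_mul]

lemma ofDigits_reverse_neg_one {R : Type*} [CommRing R] (l : List ℕ) :
    Nat.ofDigits (-1 : R) l.reverse = (-1) ^ (l.length + 1) * Nat.ofDigits (-1 : R) l := by
  induction l with
  | nil => simp [Nat.ofDigits]
  | cons a t ih =>
      rw [List.reverse_cons, ofDigits_append', ih, List.length_reverse, ofDigits_cons',
        ofDigits_cons', List.length_cons, ofDigits_nil']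
      ring

theorem ball_div_99 (x : ℕ) (h : rev x < x) : 99 ∣ ball x := by
  set y := x - rev x with hy
  set L := (Nat.digits 10 x).length with hL
  -- the padded list
  set l : List ℕ := Nat.digits 10 y ++ List.replicate (L - (Nat.digits 10 y).length) 0 with hl
  have hyx : y ≤ x := Nat.sub_le _ _
  have hlen : (Nat.digits 10 y).length ≤ L := Nat.le_digits_len_le 10 y x hyx
  have hllen : l.length = L := by
    rw [hl, List.length_append, List.length_replicate]
    omega
  have hofl : Nat.ofDigits 10 l = y := by
    rw [hl, Nat.ofDigits_append, Nat.ofDigits_digits]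
    have : Nat.ofDigits 10 (List.replicate (L - (Nat.digits 10 y).length) 0) = 0 :=
      ofDigits_replicate_zero _ _
    simp [this]
  have hrle : rev x ≤ x := le_of_lt h
  have hball : ball x = y + Nat.ofDigits 10 l.reverse := by
    rw [ball, revPad]
  -- divisibility by 9
  have h9 : 9 ∣ ball x := by
    rw [← ZMod.natCast_eq_zero_iff]
    have h10 : ((10 : ℕ) : ZMod 9) = 1 := by decide
    have hxc : (x : ZMod 9) = ((Nat.digits 10 x).sum : ZMod 9) := by
      conv_lhs => rw [← Nat.ofDigits_digits 10 x]
      rw [Nat.coe_ofDigits, h10, ofDigits_one']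
    have hrc : (rev x : ZMod 9) = ((Nat.digits 10 x).sum : ZMod 9) := by
      rw [rev, Nat.coe_ofDigits, h10, ofDigits_one', List.sum_reverse]
    have hyc : (y : ZMod 9) = 0 := by
      rw [hy, Nat.cast_sub hrle, hxc, hrc, sub_self]
    have hpc : ((Nat.ofDigits 10 l.reverse : ℕ) : ZMod 9) = 0 := by
      rw [Nat.coe_ofDigits, h10, ofDigits_one', List.sum_reverse, ← ofDigits_one', ← h10,
        ← Nat.coe_ofDigits, hofl, hyc]
    rw [hball, Nat.cast_add, hyc, hpc, add_zero]
  -- divisibility by 11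
  have h11 : 11 ∣ ball x := by
    rw [← ZMod.natCast_eq_zero_iff]
    have h10 : ((10 : ℕ) : ZMod 11) = -1 := by decide
    set D : ZMod 11 := Nat.ofDigits (-1 : ZMod 11) (Nat.digits 10 x) with hD
    set e : ZMod 11 := (-1) ^ (L + 1) with he
    have he2 : e * e = 1 := by
      rw [he, ← pow_add, ← two_mul, pow_mul]
      norm_num
    have hxc : (x : ZMod 11) = D := by
      conv_lhs => rw [← Nat.ofDigits_digits 10 x]
      rw [Nat.coe_ofDigits, h10, hD]
    have hrc : (rev x : ZMod 11) = e * D := by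
      rw [rev, Nat.coe_ofDigits, h10, ofDigits_reverse_neg_one, ← hL, he, hD]
    have hyc : (y : ZMod 11) = D - e * D := by
      rw [hy, Nat.cast_sub hrle, hxc, hrc]
    have hyl : (y : ZMod 11) = Nat.ofDigits (-1 : ZMod 11) l := by
      rw [← hofl, Nat.coe_ofDigits, h10]
    have hpc : ((Nat.ofDigits 10 l.reverse : ℕ) : ZMod 11) = e * (y : ZMod 11) := by
      rw [Nat.coe_ofDigits, h10, ofDigits_reverse_neg_one, hllen, ← he, ← hyl]
    rw [hball, Nat.cast_add, hpc, hyc]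
    linear_combination (-D) * he2
  have : (99 : ℕ) = 9 * 11 := by norm_num
  rw [this]
  exact Nat.Coprime.mul_dvd_of_dvd_of_dvd (by norm_num) h9 h11
end

section
/- For every integer m ≥ 1, the number 99·(10^m + 1) is a Ball magic number; that is, there exists a natural number x with rev(x) < x such that Ball(x) = 99·(10^m + 1). -/
lemma ofDigits_repl_zero (n : ℕ) : Nat.ofDigits 10 (List.replicate n 0) = 0 := by
  induction n with
  | zero => simp
  | succ k ih => simp [List.replicate_succ, Nat.ofDigits_cons, ih]

lemma digits_x (n : ℕ) :
    Nat.digits 10 (10 + 10 ^ (2 + n) * 1) = [0, 1] ++ List.replicate n 0 ++ [1] := by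
  have h := Nat.digits_append_zeroes_append_digits (b := 10) (k := n) (m := 1) (n := 10)
    (by norm_num) (by norm_num)
  simpa using h.symm

lemma digits_d (n : ℕ) :
    Nat.digits 10 (9 + 10 ^ (1 + n) * 9) = [9] ++ List.replicate n 0 ++ [9] := by
  have h := Nat.digits_append_zeroes_append_digits (b := 10) (k := n) (m := 9) (n := 9)
    (by norm_num) (by norm_num)
  simpa using h.symm

theorem ballMagic_99_mul_pow_add_one (m : ℕ) (hm : 1 ≤ m) :
    IsBallMagic (99 * (10 ^ m + 1)) := by
  obtain ⟨n, rfl⟩ : ∃ n, m = n + 1 := ⟨m - 1, (Nat.succ_pred_eq_of_pos hm).symm⟩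
  refine ⟨10 ^ (n + 2) + 10, ?_, ?_⟩
  · -- rev x = 10^(n+1) + 1
    have hx : Nat.digits 10 (10 ^ (n + 2) + 10) = [0, 1] ++ List.replicate n 0 ++ [1] := by
      have := digits_x n
      rw [show 10 + 10 ^ (2 + n) * 1 = 10 ^ (n + 2) + 10 by ring] at this
      exact this
    have hrev : rev (10 ^ (n + 2) + 10) = 1 + 10 ^ (n + 1) := by
      unfold rev
      rw [hx]
      simp [List.reverse_append, Nat.ofDigits_append, Nat.ofDigits_cons, Nat.ofDigits_nil,
        ofDigits_repl_zero]
      ring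
    rw [hrev]
    have h1 : 10 ^ (n + 1) < 10 ^ (n + 2) := by
      exact pow_lt_pow_right₀ (by norm_num) (by omega)
    omega
  · -- ball computation
    have hx : Nat.digits 10 (10 ^ (n + 2) + 10) = [0, 1] ++ List.replicate n 0 ++ [1] := by
      have := digits_x n
      rw [show 10 + 10 ^ (2 + n) * 1 = 10 ^ (n + 2) + 10 by ring] at this
      exact this
    have hrev : rev (10 ^ (n + 2) + 10) = 1 + 10 ^ (n + 1) := by
      unfold rev
      rw [hx]
      simp [List.reverse_append, Nat.ofDigits_append, Nat.ofDigits_cons, Nat.ofDigits_nil,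
        ofDigits_repl_zero]
      ring
    have hd : 10 ^ (n + 2) + 10 - rev (10 ^ (n + 2) + 10) = 9 + 10 ^ (1 + n) * 9 := by
      rw [hrev]
      have : 10 ^ (n + 2) = 10 * 10 ^ (n + 1) := by ring
      rw [this]
      have : (10:ℕ) ^ (1 + n) = 10 ^ (n + 1) := by ring
      rw [this]
      omega
    unfold ball
    rw [hd, hx]
    have hdd := digits_d n
    unfold revPad
    rw [hdd]
    have hlen1 : ([9] ++ List.replicate n 0 ++ [9]).length = n + 2 := by simp
    have hlen2 : ([0, 1] ++ List.replicate n 0 ++ [1]).length = n + 3 := by simp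
    rw [hlen1, hlen2]
    have : n + 3 - (n + 2) = 1 := by omega
    rw [this]
    simp [List.reverse_append, Nat.ofDigits_append, Nat.ofDigits_cons, Nat.ofDigits_nil,
      ofDigits_repl_zero]
    ring
end

section
/- There is no two-digit reverse divisor: for every natural number x with 10 ≤ x ≤ 99 whose digit list is not a palindrome, there is no integer k with 1 < k < 10 such that rev(x) = k·x. -/
theorem no_two_digit_reverse_divisor (x : ℕ) (h1 : 10 ≤ x) (h2 : x ≤ 99)
    (hpal : ¬ (Nat.digits 10 x).Palindrome) :
    ¬ ∃ k : ℕ, 1 < k ∧ k < 10 ∧ rev x = k * x := by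
  rintro ⟨k, hk1, hk2, h3⟩
  set a := x / 10 with ha
  set b := x % 10 with hb
  have hx : x = 10 * a + b := by omega
  have ha1 : 1 ≤ a := by omega
  have ha9 : a ≤ 9 := by omega
  have hb9 : b ≤ 9 := by omega
  have hd : Nat.digits 10 x = [b, a] := by
    rw [Nat.digits_def' (by norm_num : 2 ≤ 10) (by omega : 0 < x),
        Nat.digits_def' (by norm_num : 2 ≤ 10) (by omega : 0 < x / 10)]
    have : x / 10 / 10 = 0 := by omega
    have h2 : x / 10 % 10 = a := by omega
    rw [this, h2]
    simp [hb]
  have hrev : rev x = a + 10 * b := by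
    simp [rev, hd, Nat.ofDigits]; try ring
  rw [hrev, hx] at h3
  interval_cases k <;> omega
end

section
/- There is no three-digit reverse divisor: for every natural number x with 100 ≤ x ≤ 999 whose digit list is not a palindrome, there is no integer k with 1 < k < 10 such that rev(x) = k·x. -/
lemma digits3 (x : ℕ) (h1 : 100 ≤ x) (h2 : x ≤ 999) :
    Nat.digits 10 x = [x % 10, x / 10 % 10, x / 100] := by
  rw [Nat.digits_def' (by norm_num) (by omega),
      Nat.digits_def' (by norm_num) (by omega),
      Nat.digits_def' (by norm_num) (by omega)]
  have : x / 10 / 10 = x / 100 := by omega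
  rw [this]
  have : x / 100 % 10 = x / 100 := by omega
  rw [this]
  have : x / 100 / 10 = 0 := by omega
  rw [this, Nat.digits_zero]

theorem no_three_digit_reverse_divisor (x : ℕ) (h1 : 100 ≤ x) (h2 : x ≤ 999)
    (hpal : ¬ (Nat.digits 10 x).Palindrome) :
    ¬ ∃ k : ℕ, 1 < k ∧ k < 10 ∧ rev x = k * x := by
  rintro ⟨k, hk1, hk2, heq⟩
  rw [rev, digits3 x h1 h2] at heq
  simp [Nat.ofDigits] at heq
  obtain ⟨a, b, c, ha, hb, hc, hx⟩ : ∃ a b c : ℕ, a ≤ 9 ∧ b ≤ 9 ∧ c ≤ 9 ∧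
      x = 100 * a + 10 * b + c := ⟨x / 100, x / 10 % 10, x % 10, by omega, by omega, by omega, by omega⟩
  have e1 : x / 100 = a := by omega
  have e2 : x / 10 % 10 = b := by omega
  have e3 : x % 10 = c := by omega
  have ha1 : 1 ≤ a := by omega
  rw [e1, e2, e3, hx] at heq
  clear e1 e2 e3 hx h1 h2 hpal
  interval_cases k <;> interval_cases c <;> omega
end

section
/- For every natural number n > 3, the number N = 11·(10^(n−2) − 1) is a reverse divisor with quotient 9: rev(N) = 9·N. -/
lemma digits_11_pow_sub_one (m : ℕ) :
    Nat.digits 10 (11 * 10 ^ m - 1) = List.replicate m 9 ++ [0, 1] := by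
  induction m with
  | zero => norm_num
  | succ m ih =>
    have hp : 1 ≤ 10 ^ m := Nat.one_le_pow _ _ (by norm_num)
    have h : 11 * 10 ^ (m + 1) - 1 = 10 * (11 * 10 ^ m - 1) + 9 := by
      rw [pow_succ]; omega
    rw [h, Nat.digits_def' (by norm_num : (1:ℕ) < 10) (by omega)]
    have h1 : (10 * (11 * 10 ^ m - 1) + 9) % 10 = 9 := by omega
    have h2 : (10 * (11 * 10 ^ m - 1) + 9) / 10 = 11 * 10 ^ m - 1 := by omega
    rw [h1, h2, ih, List.replicate_succ]
    simp

lemma digits_N (k : ℕ) :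
    Nat.digits 10 (11 * (10 ^ (k + 2) - 1)) =
      9 :: 8 :: (List.replicate k 9 ++ [0, 1]) := by
  have hp : 1 ≤ 10 ^ k := Nat.one_le_pow _ _ (by norm_num)
  have h : 11 * (10 ^ (k + 2) - 1) = 10 * (10 * (11 * 10 ^ k - 1) + 8) + 9 := by
    rw [pow_succ, pow_succ]
    generalize 10 ^ k = t at hp ⊢
    omega
  rw [h, Nat.digits_def' (by norm_num : (1:ℕ) < 10) (by omega)]
  have h1 : (10 * (10 * (11 * 10 ^ k - 1) + 8) + 9) % 10 = 9 := by omega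
  have h2 : (10 * (10 * (11 * 10 ^ k - 1) + 8) + 9) / 10
      = 10 * (11 * 10 ^ k - 1) + 8 := by omega
  rw [h1, h2, Nat.digits_def' (by norm_num : (1:ℕ) < 10) (by omega)]
  have h3 : (10 * (11 * 10 ^ k - 1) + 8) % 10 = 8 := by omega
  have h4 : (10 * (11 * 10 ^ k - 1) + 8) / 10 = 11 * 10 ^ k - 1 := by omega
  rw [h3, h4, digits_11_pow_sub_one]

lemma ofDigits_replicate_nine (k : ℕ) :
    Nat.ofDigits 10 (List.replicate k 9) = 10 ^ k - 1 := by
  induction k with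
  | zero => simp
  | succ k ih =>
    have hp : 1 ≤ 10 ^ k := Nat.one_le_pow _ _ (by norm_num)
    rw [List.replicate_succ, Nat.ofDigits_cons, ih, pow_succ]
    omega

theorem rev_11_mul (n : ℕ) (hn : 3 < n) :
    rev (11 * (10 ^ (n - 2) - 1)) = 9 * (11 * (10 ^ (n - 2) - 1)) := by
  obtain ⟨k, hk⟩ : ∃ k, n - 2 = k + 2 := ⟨n - 4, by omega⟩
  rw [hk]
  have hp : 1 ≤ 10 ^ k := Nat.one_le_pow _ _ (by norm_num)
  unfold rev
  rw [digits_N]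
  have hrev : (9 :: 8 :: (List.replicate k 9 ++ [0, 1])).reverse
      = 1 :: 0 :: (List.replicate k 9 ++ [8, 9]) := by
    simp [List.reverse_replicate]
  rw [hrev]
  rw [Nat.ofDigits_cons, Nat.ofDigits_cons, Nat.ofDigits_append,
    ofDigits_replicate_nine]
  simp [Nat.ofDigits]
  rw [pow_succ, pow_succ]
  generalize 10 ^ k = t at hp ⊢
  ring_nf
  omega
end

section
/- For every integer n ≥ 2, the number D = 11·(10^(2^n) − 1) has at least n + 1 divisors that are Ball magic numbers: there exists a finite set S of natural numbers with card S = n + 1 such that every element of S is a Ball magic number dividing D. -/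
lemma digits_pow10 (m : ℕ) (hm : 1 ≤ m) :
    Nat.digits 10 (10 ^ m) = List.replicate m 0 ++ [1] := by
  induction m with
  | zero => omega
  | succ k ih =>
    rcases Nat.eq_or_lt_of_le hm with h | h
    · simp [← h]
    · have hk : 1 ≤ k := by omega
      have h1 : (10:ℕ) ^ (k+1) = 10 * 10 ^ k + 0 := by ring
      rw [h1, Nat.digits_def' (by norm_num : 1 < 10) (by positivity)]
      have e1 : (10 * 10 ^ k + 0) % 10 = 0 := by omega
      have e2 : (10 * 10 ^ k + 0) / 10 = 10 ^ k := by omega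
      rw [e1, e2, ih hk, List.replicate_succ]
      simp

lemma digits_nines (m : ℕ) :
    Nat.digits 10 (10 ^ m - 1) = List.replicate m 9 := by
  induction m with
  | zero => simp
  | succ k ih =>
    have h1 : (10:ℕ) ^ (k+1) - 1 = 10 * (10 ^ k - 1) + 9 := by
      have : (1:ℕ) ≤ 10 ^ k := Nat.one_le_pow _ _ (by norm_num)
      omega
    rw [h1, Nat.digits_def' (by norm_num : 1 < 10) (by positivity)]
    have : (10 * (10 ^ k - 1) + 9) % 10 = 9 := by omega
    have h2 : (10 * (10 ^ k - 1) + 9) / 10 = 10 ^ k - 1 := by omega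
    rw [this, h2, ih, List.replicate_succ]

lemma ofDigits_replicate_zero_s11 (m : ℕ) : Nat.ofDigits 10 (List.replicate m 0) = 0 := by
  induction m with
  | zero => simp
  | succ k ih => simp [List.replicate_succ, Nat.ofDigits_cons, ih]

lemma rev_pow10 (m : ℕ) (hm : 1 ≤ m) : rev (10 ^ m) = 1 := by
  unfold rev
  rw [digits_pow10 m hm]
  simp [Nat.ofDigits_cons, ofDigits_replicate_zero_s11]

lemma ball_pow10 (m : ℕ) (hm : 1 ≤ m) : ball (10 ^ m) = 11 * (10 ^ m - 1) := by
  have h9 : (1:ℕ) ≤ 10 ^ m := Nat.one_le_pow _ _ (by norm_num)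
  unfold ball revPad
  rw [rev_pow10 m hm, digits_pow10 m hm, digits_nines m]
  simp only [List.length_append, List.length_replicate, List.length_singleton]
  have hlen : m + 1 - m = 1 := by omega
  rw [hlen]
  have : (List.replicate m 9 ++ List.replicate 1 0).reverse = 0 :: List.replicate m 9 := by
    simp [List.reverse_replicate]
  rw [this, Nat.ofDigits_cons]
  have hod : Nat.ofDigits 10 (List.replicate m 9) = 10 ^ m - 1 := by
    conv_rhs => rw [← Nat.ofDigits_digits 10 (10 ^ m - 1), digits_nines m]
  rw [hod]
  omega

theorem magic_divisors_of_reverse_divisor (n : ℕ) (hn : 2 ≤ n) :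
    ∃ S : Finset ℕ, S.card = n + 1 ∧
      ∀ b ∈ S, IsBallMagic b ∧ b ∣ 11 * (10 ^ 2 ^ n - 1) := by
  refine ⟨(Finset.range (n+1)).image (fun k => 11 * (10 ^ 2 ^ k - 1)), ?_, ?_⟩
  · rw [Finset.card_image_of_injOn, Finset.card_range]
    intro a _ b _ hab
    dsimp only at hab
    have h1 : (10:ℕ) ^ 2 ^ a = 10 ^ 2 ^ b := by
      have ha : (1:ℕ) ≤ 10 ^ 2 ^ a := Nat.one_le_pow _ _ (by norm_num)
      have hb : (1:ℕ) ≤ 10 ^ 2 ^ b := Nat.one_le_pow _ _ (by norm_num)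
      omega
    have := Nat.pow_right_injective (by norm_num : 2 ≤ 10) h1
    exact Nat.pow_right_injective (by norm_num) this
  · intro b hb
    simp only [Finset.mem_image, Finset.mem_range] at hb
    obtain ⟨k, hk, rfl⟩ := hb
    constructor
    · refine ⟨10 ^ 2 ^ k, ?_, ball_pow10 _ (Nat.one_le_two_pow)⟩
      rw [rev_pow10 _ (Nat.one_le_two_pow)]
      exact Nat.one_lt_pow (by positivity) (by norm_num)
    · apply mul_dvd_mul_left
      obtain ⟨m, hm⟩ : 2 ^ k ∣ 2 ^ n := pow_dvd_pow 2 (by omega)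
      rw [hm, pow_mul]
      simpa using Nat.sub_dvd_pow_sub_pow (10 ^ 2 ^ k) 1 m
end

section
/- For every odd integer n > 1, the number N = 1089·uz(n) is a reverse divisor with quotient 9: rev(N) = 9·N. -/
/-- The undulating number `uz n` with `n` digits: `1, 10, 101, 1010, 10101, …`. -/
def uz (n : ℕ) : ℕ :=
  if n % 2 = 0 then 10 * ((100 ^ (n / 2) - 1) / 99) else (100 ^ ((n + 1) / 2) - 1) / 99

lemma ofDigits_replicate_nine_s14 (m : ℕ) (L : List ℕ) :
    Nat.ofDigits 10 (List.replicate m 9 ++ L) + 1 = 10 ^ m * (1 + Nat.ofDigits 10 L) := by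
  induction m with
  | zero => simp [Nat.ofDigits]; ring
  | succ m ih =>
    rw [List.replicate_succ, List.cons_append, Nat.ofDigits_cons]
    rw [show (9:ℕ) + 10 * Nat.ofDigits 10 (List.replicate m 9 ++ L) + 1
        = 10 * (Nat.ofDigits 10 (List.replicate m 9 ++ L) + 1) by ring, ih, pow_succ]
    ring

theorem rev_1089_mul_uz (n : ℕ) (hn : 1 < n) (hodd : Odd n) :
    rev (1089 * uz n) = 9 * (1089 * uz n) := by
  obtain ⟨k, rfl⟩ := hodd
  have hk : 1 ≤ k := by omega
  have huz : uz (2 * k + 1) = (100 ^ (k + 1) - 1) / 99 := by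
    have h2 : (2 * k + 1) % 2 = 1 := by omega
    have h3 : (2 * k + 1 + 1) / 2 = k + 1 := by omega
    simp [uz, h2, h3]
  have hdvd : 99 ∣ 100 ^ (k + 1) - 1 := by
    simpa using Nat.sub_dvd_pow_sub_pow 100 1 (k + 1)
  have hN : 1089 * uz (2 * k + 1) = 11 * (100 ^ (k + 1) - 1) := by
    rw [huz, show (1089 : ℕ) = 11 * 99 by norm_num, mul_assoc, Nat.mul_div_cancel' hdvd]
  set L : List ℕ := 9 :: 8 :: (List.replicate (2 * k) 9 ++ [0, 1]) with hL
  have hpow : (10 : ℕ) ^ (2 * k) = 100 ^ k := by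
    rw [show (100 : ℕ) = 10 ^ 2 by norm_num, ← pow_mul]
  have hpos : 1 ≤ (100 : ℕ) ^ k := Nat.one_le_pow _ _ (by norm_num)
  have h1 : Nat.ofDigits 10 (List.replicate (2 * k) 9 ++ [0, 1]) + 1 = 100 ^ k * 11 := by
    rw [ofDigits_replicate_nine_s14, hpow]
    norm_num [Nat.ofDigits]
  have hNL : Nat.ofDigits 10 L = 1089 * uz (2 * k + 1) := by
    rw [hN, hL, Nat.ofDigits_cons, Nat.ofDigits_cons]
    have : (100 : ℕ) ^ (k + 1) = 100 * 100 ^ k := by ring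
    omega
  have hdigits : Nat.digits 10 (1089 * uz (2 * k + 1)) = L := by
    rw [← hNL]
    apply Nat.digits_ofDigits 10 (by norm_num)
    · intro l hl
      simp only [hL, List.mem_cons, List.mem_append, List.mem_replicate,
        List.mem_singleton, List.not_mem_nil] at hl
      rcases hl with rfl | rfl | ⟨-, rfl⟩ | rfl | rfl | h
      · norm_num
      · norm_num
      · norm_num
      · norm_num
      · norm_num
      · exact h.elim
    · intro h
      have : L.getLast h = 1 := by
        simp [hL, List.getLast_append]
      omega
  have hrev : L.reverse = 1 :: 0 :: (List.replicate (2 * k) 9 ++ [8, 9]) := by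
    simp [hL, List.reverse_replicate]
  rw [rev, hdigits, hrev, hN]
  rw [Nat.ofDigits_cons, Nat.ofDigits_cons]
  have h2 : Nat.ofDigits 10 (List.replicate (2 * k) 9 ++ [8, 9]) + 1 = 100 ^ k * 99 := by
    rw [ofDigits_replicate_nine_s14, hpow]
    norm_num [Nat.ofDigits]
  have : (100 : ℕ) ^ (k + 1) = 100 * 100 ^ k := by ring
  omega
end

section
/- For all integers m > n > 1, the product of the repunits R_m · R_n is not a perfect square (there is no natural number s with s² = R_m · R_n). -/
/-- The repunit with `n` ones. -/
def repunit (n : ℕ) : ℕ := (10 ^ n - 1) / 9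

/-- Geometric sum `1 + q + q^2 + ... + q^(k-1)`. -/
def geomS (q k : ℕ) : ℕ := ∑ i ∈ Finset.range k, q ^ i

lemma geomS_succ (q k : ℕ) : geomS q (k + 1) = geomS q k + q ^ k :=
  Finset.sum_range_succ _ _

lemma geomS_eq (Q k : ℕ) : Q * geomS (Q + 1) k + 1 = (Q + 1) ^ k := by
  induction k with
  | zero => simp [geomS]
  | succ k ih =>
    rw [geomS_succ, pow_succ, ← ih]
    ring

lemma geomS_pos (q k : ℕ) (hk : 1 ≤ k) : 1 ≤ geomS q k := by
  have h : q ^ 0 ≤ geomS q k :=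
    Finset.single_le_sum (f := fun i => q ^ i) (fun i _ => Nat.zero_le _)
      (Finset.mem_range.mpr hk)
  simpa using h

lemma geomS_add (q a b : ℕ) : geomS q (a + b) = geomS q a + q ^ a * geomS q b := by
  induction b with
  | zero => simp [geomS]
  | succ b ih =>
    rw [← add_assoc, geomS_succ, ih, geomS_succ, pow_add]
    ring

lemma nine_repunit (n : ℕ) : 9 * repunit n + 1 = 10 ^ n := by
  have h1 : 10 ^ n % 9 = 1 := by simp [Nat.pow_mod]
  have h2 : 1 ≤ 10 ^ n := Nat.one_le_pow _ _ (by norm_num)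
  unfold repunit
  omega

lemma repunit_pos (n : ℕ) (hn : 1 ≤ n) : 1 ≤ repunit n := by
  have h1 := nine_repunit n
  have h2 : 10 ^ 1 ≤ 10 ^ n := Nat.pow_le_pow_right (by norm_num) hn
  simp at h2
  omega

lemma repunit_mul (d k : ℕ) : repunit (d * k) = repunit d * geomS (10 ^ d) k := by
  have h1 := nine_repunit d
  have h2 := nine_repunit (d * k)
  have h3 := geomS_eq (9 * repunit d) k
  rw [h1, ← pow_mul] at h3
  rw [mul_assoc] at h3
  omega

lemma pow53 (j : ℕ) (hj : 1 ≤ j) : 2 ^ j + 3 ≤ 5 ^ j := by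
  induction j with
  | zero => omega
  | succ j ih =>
    rcases Nat.eq_or_lt_of_le hj with h | h
    · simp [← h]
    · have hj' : 1 ≤ j := by omega
      have := ih hj'
      have h2 : 1 ≤ 2 ^ j := Nat.one_le_pow _ _ (by norm_num)
      rw [pow_succ, pow_succ]
      nlinarith

/-- `10^j + 1` is never a perfect square for `j ≥ 1`. -/
lemma lemA (j : ℕ) (hj : 1 ≤ j) (y : ℕ) : y ^ 2 ≠ 10 ^ j + 1 := by
  intro hy
  match y with
  | 0 =>
    simp at hy
  | z + 1 =>
    have hprod : z * (z + 2) = 10 ^ j := by nlinarith [hy]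
    have h10 : (10 : ℕ) ^ j = 2 ^ j * 5 ^ j := by
      rw [← Nat.mul_pow]
    have hz0 : 1 ≤ z := by
      rcases Nat.eq_zero_or_pos z with rfl | h
      · simp at hprod
        have : 1 ≤ 10 ^ j := Nat.one_le_pow _ _ (by norm_num)
        omega
      · exact h
    have h5 : Nat.Prime 5 := by norm_num
    have h5dvd : 5 ^ j ∣ z * (z + 2) := by
      rw [hprod, h10]
      exact dvd_mul_left _ _
    -- 5^j divides z or z+2 entirely
    have hkey : 5 ^ j ≤ z + 2 := by
      by_cases h : 5 ∣ z
      · have h' : ¬ 5 ∣ (z + 2) := by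
          intro h'
          have h2 : (5 : ℕ) ∣ 2 := by
            have := Nat.dvd_sub h' h
            simpa using this
          norm_num at h2
        have hcop : Nat.Coprime (5 ^ j) (z + 2) :=
          Nat.Coprime.pow_left _ ((Nat.Prime.coprime_iff_not_dvd h5).mpr h')
        have hdz : 5 ^ j ∣ z := hcop.dvd_of_dvd_mul_right h5dvd
        have : 5 ^ j ≤ z := Nat.le_of_dvd hz0 hdz
        omega
      · have hcop : Nat.Coprime (5 ^ j) z :=
          Nat.Coprime.pow_left _ ((Nat.Prime.coprime_iff_not_dvd h5).mpr h)
        have hdz : 5 ^ j ∣ z + 2 := hcop.dvd_of_dvd_mul_left h5dvd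
        exact Nat.le_of_dvd (by omega) hdz
    have h53 : 2 ^ j + 3 ≤ 5 ^ j := pow53 j hj
    have h5p : 5 ≤ 5 ^ j := by
      calc (5:ℕ) = 5 ^ 1 := by norm_num
      _ ≤ 5 ^ j := Nat.pow_le_pow_right (by norm_num) hj
    nlinarith [hprod, h10, hkey, h53, h5p]

/--
Pell-style descent: there is no solution of `X^2 = (Q+1) + (Q+1)*Q*y^2`
with `y ≥ 1` and `2*(Q+1) ∣ X`, where `Q + 1` is an even number
(with additional hypotheses matching `Q + 1 = 10^d`).
-/
lemma pell_aux (Q : ℕ) (hQodd : Q % 2 = 1) (hQ9 : 9 ≤ Q)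
    (h4 : (Q + 1) % 4 = 0 ∨ Q = 9) (hA : ∀ y : ℕ, y ^ 2 ≠ Q + 2) :
    ∀ y : ℕ, ∀ X : ℕ, X ^ 2 = (Q + 1) + (Q + 1) * Q * y ^ 2 → 1 ≤ y →
      2 * (Q + 1) ∣ X → False := by
  intro y
  induction y using Nat.strong_induction_on with
  | _ y IH =>
    intro X hX hy hdvd
    have hq0 : 0 < Q + 1 := by omega
    by_cases hbig : y ^ 2 ≤ 4 * (Q + 1)
    · -- terminal case
      obtain ⟨z, rfl⟩ := hdvd
      -- cancel one factor of (Q+1)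
      have heq : 4 * (Q + 1) * z ^ 2 = 1 + Q * y ^ 2 := by
        have h : (Q + 1) * (4 * (Q + 1) * z ^ 2) = (Q + 1) * (1 + Q * y ^ 2) := by
          nlinarith [hX]
        exact Nat.eq_of_mul_eq_mul_left hq0 h
      have hdvd1 : (Q + 1) ∣ y ^ 2 - 1 := by
        have h1 : (Q + 1) ∣ 1 + Q * y ^ 2 := ⟨4 * z ^ 2, by linarith [heq]⟩
        have h2 : (Q + 1) ∣ (Q + 1) * y ^ 2 := ⟨y ^ 2, rfl⟩
        have h3 : (Q + 1) * y ^ 2 - (1 + Q * y ^ 2) = y ^ 2 - 1 := by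
          have h4 : (Q + 1) * y ^ 2 = Q * y ^ 2 + y ^ 2 := by ring
          omega
        have h5 := Nat.dvd_sub h2 h1
        rwa [h3] at h5
      obtain ⟨c, hc⟩ := hdvd1
      have hy1 : 1 ≤ y ^ 2 := by nlinarith
      have hy2 : y ^ 2 = (Q + 1) * c + 1 := by omega
      have hc3 : c ≤ 3 := by nlinarith
      rw [hy2] at heq
      have h4z : 4 * z ^ 2 = c * Q + 1 := by
        have h : (Q + 1) * (4 * z ^ 2) = (Q + 1) * (c * Q + 1) := by
          ring_nf
          ring_nf at heq
          linarith
        exact Nat.eq_of_mul_eq_mul_left hq0 h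
      interval_cases c
      · -- 4 z^2 = 1
        omega
      · -- y^2 = Q + 2
        exact hA y (by linarith [hy2])
      · -- 4 z^2 = 2Q+1, parity contradiction
        omega
      · -- 4 z^2 = 3Q+1
        rcases h4 with h | h
        · omega
        · -- Q = 9 : 4 z^2 = 28, z^2 = 7
          subst h
          have hz2 : z ^ 2 = 7 := by omega
          have hz3 : z ≤ 2 := by nlinarith
          interval_cases z <;> omega
    · -- descent case : y^2 > 4(Q+1)
      push_neg at hbig
      have hXpos : 0 < X := by
        rcases Nat.eq_zero_or_pos X with h | h
        · rw [h] at hX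
          simp at hX
          omega
        · exact h
      -- 2X < (2Q+1) y
      have h2X : 2 * X < (2 * Q + 1) * y := by
        have hsq : (2 * X) ^ 2 < ((2 * Q + 1) * y) ^ 2 := by
          have e : (2 * X) ^ 2 = 4 * (Q + 1) + 4 * ((Q + 1) * Q * y ^ 2) := by
            rw [mul_pow, hX]
            ring
          nlinarith [e, hbig]
        exact lt_of_pow_lt_pow_left₀ 2 (Nat.zero_le _) hsq
      -- Q y < X
      have hQyX : Q * y < X := by
        have hsq : (Q * y) ^ 2 < X ^ 2 := by nlinarith [hX, hy]
        exact lt_of_pow_lt_pow_left₀ 2 (Nat.zero_le _) hsq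
      -- 2(Q+1)Q y < (2Q+1) X
      have hX1pos : 2 * (Q + 1) * Q * y < (2 * Q + 1) * X := by
        have hsq : (2 * (Q + 1) * Q * y) ^ 2 < ((2 * Q + 1) * X) ^ 2 := by
          have e : ((2 * Q + 1) * X) ^ 2 =
              (2 * Q + 1) ^ 2 * ((Q + 1) + (Q + 1) * Q * y ^ 2) := by
            rw [mul_pow, hX]
          nlinarith [e, hy]
        exact lt_of_pow_lt_pow_left₀ 2 (Nat.zero_le _) hsq
      obtain ⟨y₁, hy₁⟩ : ∃ y₁, (2 * Q + 1) * y = 2 * X + (y₁ + 1) := by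
        refine ⟨(2 * Q + 1) * y - 2 * X - 1, ?_⟩
        omega
      obtain ⟨X₁, hX₁⟩ : ∃ X₁, (2 * Q + 1) * X = 2 * (Q + 1) * Q * y + X₁ := by
        refine ⟨(2 * Q + 1) * X - 2 * (Q + 1) * Q * y, ?_⟩
        omega
      have hy₁lt : y₁ + 1 < y := by
        have hlink : (2 * Q + 1) * y = 2 * (Q * y) + y := by ring
        omega
      have hX₁dvd : 2 * (Q + 1) ∣ X₁ := by
        have h1 : 2 * (Q + 1) ∣ (2 * Q + 1) * X := hdvd.mul_left _
        have h2 : 2 * (Q + 1) ∣ 2 * (Q + 1) * Q * y := ⟨Q * y, by ring⟩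
        have h3 : (2 * Q + 1) * X - 2 * (Q + 1) * Q * y = X₁ := by omega
        have h4' := Nat.dvd_sub h1 h2
        rwa [h3] at h4'
      have hX₁eq : X₁ ^ 2 = (Q + 1) + (Q + 1) * Q * (y₁ + 1) ^ 2 := by
        have hz1 : (X₁ : ℤ) = (2 * Q + 1) * (X : ℤ) - 2 * (Q + 1) * Q * (y : ℤ) := by
          have h := hX₁
          zify at h
          linarith
        have hz2 : ((y₁ : ℤ) + 1) = (2 * Q + 1) * (y : ℤ) - 2 * (X : ℤ) := by
          have h := hy₁
          zify at h
          linarith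
        have hzX : (X : ℤ) ^ 2 = (Q + 1) + (Q + 1) * Q * (y : ℤ) ^ 2 := by
          exact_mod_cast hX
        have goal : (X₁ : ℤ) ^ 2 = (Q + 1) + (Q + 1) * Q * ((y₁ : ℤ) + 1) ^ 2 := by
          rw [hz1, hz2]
          linear_combination hzX
        exact_mod_cast goal
      exact IH (y₁ + 1) hy₁lt X₁ hX₁eq (by omega) hX₁dvd

/-- `geomS (10^d) k` is not a square for odd `k ≥ 3`. -/
lemma lemB (d k : ℕ) (hd : 1 ≤ d) (hk : Odd k) (hk3 : 3 ≤ k) (y : ℕ)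
    (hy : y ^ 2 = geomS (10 ^ d) k) : False := by
  obtain ⟨t, rfl⟩ := hk
  have ht : 1 ≤ t := by omega
  have hQ1 : 9 * repunit d + 1 = 10 ^ d := nine_repunit d
  set Q : ℕ := 9 * repunit d with hQdef
  have h10 : 10 ≤ 10 ^ d := by
    calc (10:ℕ) = 10 ^ 1 := by norm_num
    _ ≤ 10 ^ d := Nat.pow_le_pow_right (by norm_num) hd
  have hQ9 : 9 ≤ Q := by omega
  have hQodd : Q % 2 = 1 := by
    have h2 : 2 ∣ 10 ^ d := dvd_pow (by norm_num) (by omega)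
    omega
  have h4 : (Q + 1) % 4 = 0 ∨ Q = 9 := by
    rcases Nat.lt_or_ge d 2 with h | h
    · right
      have hd1 : d = 1 := by omega
      subst hd1
      norm_num at hQ1
      omega
    · left
      have hdvd4 : (4 : ℕ) ∣ 10 ^ d := by
        have he : (10 : ℕ) ^ d = 10 ^ 2 * 10 ^ (d - 2) := by
          rw [← pow_add]
          congr 1
          omega
        rw [he]
        exact dvd_mul_of_dvd_left (by norm_num) _
      omega
  have hA : ∀ y : ℕ, y ^ 2 ≠ Q + 2 := by
    intro y' hy'
    exact lemA d hd y' (by omega)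
  -- set up the Pell solution
  rw [← hQ1] at hy
  have hG := geomS_eq Q (2 * t + 1)
  set X : ℕ := (Q + 1) ^ (t + 1) with hXdef
  have hX : X ^ 2 = (Q + 1) + (Q + 1) * Q * y ^ 2 := by
    have h1 : X ^ 2 = (Q + 1) ^ ((2 * t + 1) + 1) := by
      rw [hXdef, ← pow_mul]
      congr 1
      omega
    rw [h1, pow_succ, ← hG, ← hy]
    ring
  have hy1 : 1 ≤ y := by
    have hp := geomS_pos (Q + 1) (2 * t + 1) (by omega)
    nlinarith [hy, hp]
  have hdvdX : 2 * (Q + 1) ∣ X := by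
    have h2 : 2 ∣ (Q + 1) ^ t := dvd_pow (by omega) (by omega)
    obtain ⟨w, hw⟩ := h2
    exact ⟨w * 1, by rw [hXdef, pow_succ, hw]; ring⟩
  exact pell_aux Q hQodd hQ9 h4 hA y X hX hy1 hdvdX

/-- `geomS (10^d) (u+u)` is not a square for `u ≥ 1`. -/
lemma even_case (d u : ℕ) (hd : 1 ≤ d) (hu : 1 ≤ u) (α : ℕ)
    (hα : geomS (10 ^ d) (u + u) = α ^ 2) : False := by
  have hsplit : geomS (10 ^ d) (u + u) =
      (1 + (10 ^ d) ^ u) * geomS (10 ^ d) u := by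
    rw [geomS_add]
    ring
  have hG := geomS_eq (9 * repunit d) u
  rw [nine_repunit d] at hG
  have hcop : Nat.Coprime (1 + (10 ^ d) ^ u) (geomS (10 ^ d) u) := by
    by_contra hnc
    obtain ⟨p, hp, hp1, hp2⟩ := Nat.Prime.not_coprime_iff_dvd.mp hnc
    have hp' : p.Prime := hp
    have hpq : p ∣ 9 * repunit d * geomS (10 ^ d) u := Dvd.dvd.mul_left hp2 _
    have h2 : p ∣ 2 := by
      have hsub := Nat.dvd_sub hp1 hpq
      have heq2 : (1 + (10 ^ d) ^ u) - 9 * repunit d * geomS (10 ^ d) u = 2 := by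
        omega
      rwa [heq2] at hsub
    have hp2' : p = 2 := by
      have hle := Nat.le_of_dvd (by norm_num) h2
      have h2le := hp'.two_le
      omega
    subst hp2'
    have h2q : 2 ∣ (10 : ℕ) ^ d := dvd_pow (by norm_num) (by omega)
    have heven : 2 ∣ (10 ^ d : ℕ) ^ u := Dvd.dvd.trans h2q (dvd_pow_self _ (by omega))
    omega
  have hprod : (1 + (10 ^ d) ^ u) * geomS (10 ^ d) u = α ^ 2 := by
    rw [← hsplit, hα]
  obtain ⟨β, hβ⟩ := exists_eq_pow_of_mul_eq_pow
    (show IsUnit (gcd (1 + (10 ^ d) ^ u) (geomS (10 ^ d) u)) by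
      rw [gcd_eq_nat_gcd, Nat.isUnit_iff]
      exact hcop) hprod
  refine lemA (d * u) (Nat.mul_pos hd hu) β ?_
  rw [← hβ, ← pow_mul]
  omega

theorem repunit_mul_not_square (m n : ℕ) (hn : 1 < n) (hmn : n < m) :
    ¬ ∃ s : ℕ, s ^ 2 = repunit m * repunit n := by
  rintro ⟨s, hs⟩
  have hm0 : 0 < m := by omega
  have hn0 : 0 < n := by omega
  set d := Nat.gcd m n with hddef
  have hd0 : 0 < d := Nat.gcd_pos_of_pos_right m hn0
  obtain ⟨k₁, hk₁⟩ : d ∣ m := Nat.gcd_dvd_left m n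
  obtain ⟨k₂, hk₂⟩ : d ∣ n := Nat.gcd_dvd_right m n
  have hcop : Nat.Coprime k₁ k₂ := by
    have h := Nat.coprime_div_gcd_div_gcd (m := m) (n := n) hd0
    have e1 : m / d = k₁ := by rw [hk₁]; exact Nat.mul_div_cancel_left _ hd0
    have e2 : n / d = k₂ := by rw [hk₂]; exact Nat.mul_div_cancel_left _ hd0
    rwa [← hddef, e1, e2] at h
  have hk₂1 : 1 ≤ k₂ := by
    rcases Nat.eq_zero_or_pos k₂ with rfl | h
    · simp at hk₂; omega
    · exact h
  have hk₁k₂ : k₂ < k₁ := by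
    rw [hk₁, hk₂] at hmn
    exact lt_of_mul_lt_mul_left hmn (Nat.zero_le d)
  have hG1 : repunit m = repunit d * geomS (10 ^ d) k₁ := by
    rw [hk₁, repunit_mul]
  have hG2 : repunit n = repunit d * geomS (10 ^ d) k₂ := by
    rw [hk₂, repunit_mul]
  -- coprimality of G₁ and G₂
  have key : ∀ k : ℕ, ∀ p : ℕ, p.Prime → p ∣ geomS (10 ^ d) k →
      (10 : ZMod p) ^ (d * k) = 1 := by
    intro k p hp hpk
    have hG := geomS_eq (9 * repunit d) k
    rw [nine_repunit d] at hG
    have hdq : p ∣ 10 ^ (d * k) - 1 := by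
      have he : 9 * repunit d * geomS (10 ^ d) k = 10 ^ (d * k) - 1 := by
        rw [← pow_mul] at hG
        omega
      rw [← he]
      exact Dvd.dvd.mul_left hpk _
    have h1le : 1 ≤ (10 : ℕ) ^ (d * k) := Nat.one_le_pow _ _ (by norm_num)
    have hcast : ((10 ^ (d * k) - 1 : ℕ) : ZMod p) = 0 :=
      (ZMod.natCast_eq_zero_iff _ _).mpr hdq
    rw [Nat.cast_sub h1le] at hcast
    push_cast at hcast
    have := sub_eq_zero.mp hcast
    simpa using this
  have hcopG : Nat.Coprime (geomS (10 ^ d) k₁) (geomS (10 ^ d) k₂) := by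
    by_contra hnc
    obtain ⟨p, hp, hp1, hp2⟩ := Nat.Prime.not_coprime_iff_dvd.mp hnc
    have hp' : p.Prime := hp
    have h1 : (10 : ZMod p) ^ m = 1 := by rw [hk₁]; exact key k₁ p hp' hp1
    have h2 : (10 : ZMod p) ^ n = 1 := by rw [hk₂]; exact key k₂ p hp' hp2
    have hod : orderOf (10 : ZMod p) ∣ d :=
      Nat.dvd_gcd (orderOf_dvd_of_pow_eq_one h1) (orderOf_dvd_of_pow_eq_one h2)
    have h10d : (10 : ZMod p) ^ d = 1 := orderOf_dvd_iff_pow_eq_one.mp hod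
    have hGk : ∀ k : ℕ, ((geomS (10 ^ d) k : ℕ) : ZMod p) = (k : ZMod p) := by
      intro k
      unfold geomS
      push_cast
      rw [h10d]
      simp
    have hpk1 : p ∣ k₁ := by
      have h := (ZMod.natCast_eq_zero_iff (geomS (10 ^ d) k₁) p).mpr hp1
      rw [hGk k₁] at h
      exact (ZMod.natCast_eq_zero_iff k₁ p).mp h
    have hpk2 : p ∣ k₂ := by
      have h := (ZMod.natCast_eq_zero_iff (geomS (10 ^ d) k₂) p).mpr hp2
      rw [hGk k₂] at h
      exact (ZMod.natCast_eq_zero_iff k₂ p).mp h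
    have hone : p ∣ 1 := hcop ▸ Nat.dvd_gcd hpk1 hpk2
    have := Nat.le_of_dvd (by norm_num) hone
    have := hp'.two_le
    omega
  -- square decomposition
  have hs2 : s ^ 2 = (repunit d) ^ 2 * (geomS (10 ^ d) k₁ * geomS (10 ^ d) k₂) := by
    rw [hs, hG1, hG2]
    ring
  have hRpos : 0 < repunit d := repunit_pos d hd0
  have hdvds : repunit d ∣ s := (Nat.pow_dvd_pow_iff two_ne_zero).mp ⟨geomS (10 ^ d) k₁ * geomS (10 ^ d) k₂, hs2⟩
  obtain ⟨w, rfl⟩ := hdvds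
  have hw : geomS (10 ^ d) k₁ * geomS (10 ^ d) k₂ = w ^ 2 := by
    have h : (repunit d) ^ 2 * (geomS (10 ^ d) k₁ * geomS (10 ^ d) k₂) =
        (repunit d) ^ 2 * w ^ 2 := by
      rw [← hs2]
      ring
    exact Nat.eq_of_mul_eq_mul_left (pow_pos hRpos 2) h
  have hunit : IsUnit (gcd (geomS (10 ^ d) k₁) (geomS (10 ^ d) k₂)) := by
    rw [gcd_eq_nat_gcd, Nat.isUnit_iff]
    exact hcopG
  rcases Nat.even_or_odd k₁ with he₁ | ho₁
  · obtain ⟨u, hu⟩ := he₁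
    have hu1 : 1 ≤ u := by omega
    obtain ⟨α, hα⟩ := exists_eq_pow_of_mul_eq_pow hunit hw
    refine even_case d u hd0 hu1 α ?_
    rw [← hu]
    exact hα
  · rcases Nat.even_or_odd k₂ with he₂ | ho₂
    · obtain ⟨u, hu⟩ := he₂
      have hu1 : 1 ≤ u := by omega
      have hunit' : IsUnit (gcd (geomS (10 ^ d) k₂) (geomS (10 ^ d) k₁)) := by
        rw [gcd_eq_nat_gcd, Nat.isUnit_iff]
        exact hcopG.symm
      obtain ⟨α, hα⟩ := exists_eq_pow_of_mul_eq_pow hunit' (by rw [mul_comm]; exact hw)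
      refine even_case d u hd0 hu1 α ?_
      rw [← hu]
      exact hα
    · -- both odd
      obtain ⟨α, hα⟩ := exists_eq_pow_of_mul_eq_pow hunit hw
      have hk13 : 3 ≤ k₁ := by
        obtain ⟨t1, ht1⟩ := ho₁
        omega
      exact lemB d k₁ hd0 ho₁ hk13 α hα.symm
end

section
/- For all integers m > n > 1, the product (10^m − 1)·(10^n − 1) is not a perfect square (there is no natural number s with s² = (10^m − 1)·(10^n − 1)). -/
open Finset

lemma not_sq_two_mul_pow10 (i : ℕ) : ¬ ∃ c : ℕ, c ^ 2 = 2 * 10 ^ i := by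
  rintro ⟨c, hc⟩
  have hN : 2 * 10 ^ i = 2 ^ (i+1) * 5 ^ i := by
    rw [show (10:ℕ) = 2 * 5 by norm_num, mul_pow]; ring
  rw [hN] at hc
  have h2 : Even ((2 ^ (i+1) * 5 ^ i).factorization 2) := by
    rw [← hc, Nat.factorization_pow _ _]; exact ⟨c.factorization 2, by simp [two_mul]⟩
  have h5 : Even ((2 ^ (i+1) * 5 ^ i).factorization 5) := by
    rw [← hc, Nat.factorization_pow _ _]; exact ⟨c.factorization 5, by simp [two_mul]⟩
  rw [Nat.factorization_mul (by positivity) (by positivity),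
    Nat.Prime.factorization_pow (by norm_num), Nat.Prime.factorization_pow (by norm_num)] at h2 h5
  simp [Finsupp.single_apply] at h2 h5
  rcases h2 with ⟨a, ha⟩
  rcases h5 with ⟨b, hb⟩
  omega

lemma not_sq_three_mul_pow10 (i : ℕ) : ¬ ∃ c : ℕ, c ^ 2 = 3 * 10 ^ i := by
  rintro ⟨c, hc⟩
  have hN : 3 * 10 ^ i = 3 ^ 1 * (2 ^ i * 5 ^ i) := by
    rw [show (10:ℕ) = 2 * 5 by norm_num, mul_pow]; ring
  rw [hN] at hc
  have h3 : Even ((3 ^ 1 * (2 ^ i * 5 ^ i)).factorization 3) := by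
    rw [← hc, Nat.factorization_pow _ _]; exact ⟨c.factorization 3, by simp [two_mul]⟩
  rw [Nat.factorization_mul (by positivity) (by positivity),
    Nat.factorization_mul (by positivity) (by positivity),
    Nat.Prime.factorization_pow (by norm_num), Nat.Prime.factorization_pow (by norm_num),
    Nat.Prime.factorization_pow (by norm_num)] at h3
  simp [Finsupp.single_apply] at h3

lemma pow25_ge (j : ℕ) : 5 * 10 ^ j ≤ 2 * 25 ^ j ∨ j = 0 := by
  induction j with
  | zero => right; rfl
  | succ k ih =>
    left
    rcases ih with h | h
    · calc 5 * 10 ^ (k+1) = 10 * (5 * 10 ^ k) := by ring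
      _ ≤ 10 * (2 * 25 ^ k) := Nat.mul_le_mul_left _ h
      _ ≤ 25 * (2 * 25 ^ k) := Nat.mul_le_mul_right _ (by norm_num)
      _ = 2 * 25 ^ (k+1) := by ring
    · subst h; norm_num

/-- `10^j + 1` is never a perfect square for `j ≥ 1`. -/
lemma not_sq_pow10_add_one (j : ℕ) (hj : 1 ≤ j) : ¬ ∃ s : ℕ, s ^ 2 = 10 ^ j + 1 := by
  rintro ⟨s, hs⟩
  have h10even : Even ((10:ℕ) ^ j) := Nat.even_pow.mpr ⟨⟨5, rfl⟩, by omega⟩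
  obtain ⟨v, hv⟩ := h10even
  -- s is odd
  obtain ⟨t, ht⟩ : Odd s := by
    rcases Nat.even_or_odd s with ⟨t, ht⟩ | ho
    · exfalso
      subst ht
      have h4 : 4 * t ^ 2 = 10 ^ j + 1 := by rw [← hs]; ring
      omega
    · exact ho
  subst ht
  have hkey : 4 * (t * (t + 1)) = 10 ^ j := by nlinarith [hs]
  -- 5^j divides t(t+1)
  have h5j : (5:ℕ) ^ j ∣ t * (t + 1) := by
    have hdvd : (5:ℕ) ^ j ∣ 4 * (t * (t + 1)) := by
      rw [hkey, show (10:ℕ) = 2 * 5 by norm_num, mul_pow]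
      exact ⟨2 ^ j, by ring⟩
    have hcop : Nat.Coprime (5 ^ j) 4 := Nat.Coprime.pow_left _ (by norm_num)
    exact hcop.dvd_of_dvd_mul_left hdvd
  have hcases : 5 ^ j ∣ t ∨ 5 ^ j ∣ t + 1 := by
    by_cases h51 : 5 ∣ t
    · left
      have h52 : ¬ (5 ∣ t + 1) := fun h => by omega
      have hcop : Nat.Coprime (5 ^ j) (t + 1) :=
        Nat.Coprime.pow_left _ ((Nat.Prime.coprime_iff_not_dvd (by norm_num)).mpr h52)
      exact hcop.dvd_of_dvd_mul_right h5j
    · right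
      have hcop : Nat.Coprime (5 ^ j) t :=
        Nat.Coprime.pow_left _ ((Nat.Prime.coprime_iff_not_dvd (by norm_num)).mpr h51)
      exact hcop.dvd_of_dvd_mul_left h5j
  have h10pos : 0 < (10:ℕ) ^ j := by positivity
  have htpos : 0 < t := by
    rcases Nat.eq_zero_or_pos t with h | h
    · exfalso
      subst h
      simp at hkey
      omega
    · exact h
  have hge : 5 ^ j ≤ t + 1 := by
    rcases hcases with h | h
    · exact le_trans (Nat.le_of_dvd htpos h) (by omega)
    · exact Nat.le_of_dvd (by omega) h
  -- size contradiction
  have h25 : (25:ℕ) ^ j = 5 ^ j * 5 ^ j := by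
    rw [show (25:ℕ) = 5 * 5 by norm_num, mul_pow]
  have hp : 5 * 10 ^ j ≤ 2 * 25 ^ j := by
    rcases pow25_ge j with h | h
    · exact h
    · omega
  have h5le10 : (5:ℕ) ^ j ≤ 10 ^ j := Nat.pow_le_pow_left (by norm_num) j
  have h5j1 : 1 ≤ (5:ℕ) ^ j := Nat.one_le_pow _ _ (by norm_num)
  have hlow : 4 * ((5 ^ j - 1) * 5 ^ j) ≤ 4 * (t * (t + 1)) := by
    have h1 : 5 ^ j - 1 ≤ t := by omega
    exact Nat.mul_le_mul_left _ (Nat.mul_le_mul h1 hge)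
  rw [hkey] at hlow
  have hexp : 4 * ((5 ^ j - 1) * 5 ^ j) = 4 * 25 ^ j - 4 * 5 ^ j := by
    rw [h25]
    have := Nat.sub_mul (5 ^ j) 1 (5 ^ j)
    omega
  omega

/-- The Pell-type descent: positive solutions of `X² = 4x(x-1)Y² + 4x` with `Y` odd
have `X = 2xP` with `P` odd. -/
lemma pell_descent (x : ℤ) (hx : 4 ≤ x)
    (h2 : ¬ ∃ c : ℤ, c ^ 2 = 2 * x) (h3 : ¬ ∃ c : ℤ, c ^ 2 = 3 * x) :
    ∀ k : ℕ, ∀ Y : ℤ, Y.toNat ≤ k → 0 < Y → Odd Y → ∀ X : ℤ, 0 < X →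
      X ^ 2 = 4 * x * (x - 1) * Y ^ 2 + 4 * x → ∃ P : ℤ, Odd P ∧ X = 2 * x * P := by
  intro k
  induction k with
  | zero => intro Y hYk hYpos _ _ _ _; omega
  | succ k ih =>
    intro Y hYk hYpos hYodd X hXpos hEq
    by_cases hY1 : Y = 1
    · subst hY1
      have hfac : (X - 2 * x) * (X + 2 * x) = 0 := by linear_combination hEq
      rcases mul_eq_zero.mp hfac with h | h
      · exact ⟨1, odd_one, by linarith⟩
      · exfalso; nlinarith
    · have hY3 : 3 ≤ Y := by rcases hYodd with ⟨u, hu⟩; omega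
      have hXeven : Even X := by
        have : Even (X ^ 2) := ⟨2 * x * (x-1) * Y ^ 2 + 2 * x, by linarith⟩
        exact (Int.even_pow.mp this).1
      by_cases hbig : 4 * x < Y ^ 2
      · -- descent step
        have hEq' : ((2*x - 1) * X - 4*x*(x-1) * Y) ^ 2
            = 4 * x * (x - 1) * ((2*x - 1) * Y - X) ^ 2 + 4 * x := by
          linear_combination hEq
        have hXlt : X < (2*x - 1) * Y := by
          have hb : (0:ℤ) ≤ (2*x - 1) * Y := mul_nonneg (by linarith) (by linarith)
          have hd : ((2*x - 1) * Y) ^ 2 - X ^ 2 = Y ^ 2 - 4 * x := by linear_combination - hEq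
          have : X ^ 2 < ((2*x - 1) * Y) ^ 2 := by linarith
          exact lt_of_pow_lt_pow_left₀ 2 hb this
        have hY'pos : 0 < (2*x - 1) * Y - X := by linarith
        have hXgt : (2*x - 2) * Y < X := by
          have hb : (0:ℤ) ≤ X := le_of_lt hXpos
          have hd : X ^ 2 - ((2*x - 2) * Y) ^ 2 = (4*x - 4) * Y ^ 2 + 4 * x := by
            linear_combination hEq
          have h9 : (9:ℤ) ≤ Y ^ 2 := by nlinarith [hY3, sq_nonneg (Y - 3)]
          have : ((2*x - 2) * Y) ^ 2 < X ^ 2 := by nlinarith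
          exact lt_of_pow_lt_pow_left₀ 2 hb this
        have hY'lt : (2*x - 1) * Y - X < Y := by linarith
        have hX'pos : 0 < (2*x - 1) * X - 4*x*(x-1) * Y := by
          have hb : (0:ℤ) ≤ (2*x-1) * X := mul_nonneg (by linarith) (le_of_lt hXpos)
          have hd : ((2*x - 1) * X) ^ 2 - (4*x*(x-1) * Y) ^ 2
              = 4*x*(x-1) * Y ^ 2 + 4*x*(2*x-1) ^ 2 := by
            linear_combination (4*x^2 - 4*x + 1) * hEq
          have hy2 : 0 < Y ^ 2 := pow_pos hYpos 2
          have hx2 : 0 < (2*x - 1) ^ 2 := pow_pos (by linarith) 2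
          have hxx : 0 < 4*x*(x-1) * Y ^ 2 := by
            apply mul_pos
            apply mul_pos
            · linarith
            · linarith
            · exact hy2
          have h1 : (4*x*(x-1) * Y) ^ 2 < ((2*x - 1) * X) ^ 2 := by nlinarith
          have h2' : 4*x*(x-1) * Y < (2*x-1) * X := lt_of_pow_lt_pow_left₀ 2 hb h1
          linarith
        have hY'odd : Odd ((2*x - 1) * Y - X) := by
          rcases hXeven with ⟨t, ht⟩
          rcases hYodd with ⟨u, hu⟩
          exact ⟨2*x*u + x - u - t - 1, by rw [hu, ht]; ring⟩
        have hk' : ((2*x - 1) * Y - X).toNat ≤ k := by omega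
        obtain ⟨P', hP'odd, hX'eq⟩ := ih ((2*x - 1) * Y - X) hk' hY'pos hY'odd
          ((2*x - 1) * X - 4*x*(x-1) * Y) hX'pos hEq'
        refine ⟨(2*x - 1) * P' + 2*(x-1) * ((2*x - 1) * Y - X), ?_, ?_⟩
        · rcases hP'odd with ⟨p, hp⟩
          exact ⟨2*x*p + x - p + x*((2*x - 1) * Y - X) - ((2*x - 1) * Y - X) - 1,
            by rw [hp]; ring⟩
        · linear_combination (2*x-1) * hX'eq
      · -- terminal case: contradiction
        exfalso
        push_neg at hbig
        rcases hXeven with ⟨Z, hZ⟩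
        have hX2 : X = 2 * Z := by omega
        have hZpos : 0 < Z := by omega
        have hZ2 : Z ^ 2 = x * (x - 1) * Y ^ 2 + x := by
          apply mul_left_cancel₀ (show (4:ℤ) ≠ 0 by norm_num)
          rw [hX2] at hEq
          linear_combination hEq
        have hy9 : (9:ℤ) ≤ Y ^ 2 := by nlinarith [hY3, sq_nonneg (Y - 3)]
        have hZlt : Z < x * Y := by
          have hb : (0:ℤ) ≤ x * Y := mul_nonneg (by linarith) (by linarith)
          have hd : (x * Y) ^ 2 - Z ^ 2 = x * Y ^ 2 - x := by linear_combination - hZ2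
          have h9x : x * 9 ≤ x * Y ^ 2 := mul_le_mul_of_nonneg_left hy9 (by linarith)
          have : Z ^ 2 < (x * Y) ^ 2 := by linarith
          exact lt_of_pow_lt_pow_left₀ 2 hb this
        have hcpos : 0 < x * Y - Z := by linarith
        have hc2 : (x * Y - Z) ^ 2 = x * (2 * (x * Y - Z) * Y - Y ^ 2 + 1) := by
          linear_combination hZ2
        have hkey : (x * Y - Z) * (x * Y) + (x * Y - Z) * Z = x * Y ^ 2 - x := by
          linear_combination - hZ2
        have hclt : x * Y - Z < Y := by
          have hcZ : 0 < (x * Y - Z) * Z := mul_pos hcpos hZpos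
          have h1 : (x * Y - Z) * (x * Y) < x * Y ^ 2 := by linarith
          have h2' : (x * Y - Z) * (x * Y) < Y * (x * Y) := by
            have : Y * (x * Y) = x * Y ^ 2 := by ring
            linarith
          exact lt_of_mul_lt_mul_right h2' (mul_nonneg (by linarith) (by linarith))
        have hxt : 0 < x * (2 * (x * Y - Z) * Y - Y ^ 2 + 1) := by
          rw [← hc2]; positivity
        have htpos : 0 < 2 * (x * Y - Z) * Y - Y ^ 2 + 1 := by
          by_contra h
          push_neg at h
          have : x * (2 * (x * Y - Z) * Y - Y ^ 2 + 1) ≤ 0 :=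
            mul_nonpos_of_nonneg_of_nonpos (by linarith) h
          linarith
        have htlt : 2 * (x * Y - Z) * Y - Y ^ 2 + 1 < 4 := by
          have hcY : x * Y - Z ≤ Y - 1 := by linarith
          have h1 : (x * Y - Z) ^ 2 ≤ (Y - 1) ^ 2 :=
            pow_le_pow_left₀ (le_of_lt hcpos) hcY 2
          have h2' : (Y - 1) ^ 2 < Y ^ 2 := by nlinarith [hYpos]
          by_contra h
          push_neg at h
          have h4x : x * 4 ≤ x * (2 * (x * Y - Z) * Y - Y ^ 2 + 1) :=
            mul_le_mul_of_nonneg_left h (by linarith)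
          linarith [hc2, h1, h2', hbig, h4x]
        have ht123 : 2 * (x * Y - Z) * Y - Y ^ 2 + 1 = 1 ∨
            2 * (x * Y - Z) * Y - Y ^ 2 + 1 = 2 ∨
            2 * (x * Y - Z) * Y - Y ^ 2 + 1 = 3 := by omega
        rcases ht123 with h | h | h
        · -- Y = 2c, contradicting Y odd
          have hY2c : Y * (2 * (x * Y - Z) - Y) = 0 := by linear_combination h
          rcases hYodd with ⟨u, hu⟩
          rcases mul_eq_zero.mp hY2c with h' | h'
          · omega
          · omega
        · exact h2 ⟨x * Y - Z, by rw [hc2, h]; ring⟩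
        · exact h3 ⟨x * Y - Z, by rw [hc2, h]; ring⟩

/-- An odd-length (≥ 3) base-`10^i` repunit is not a perfect square. -/
lemma not_sq_geom_odd (i n : ℕ) (hi : 1 ≤ i) (hn : 3 ≤ n) (hodd : Odd n) :
    ¬ ∃ y : ℕ, y ^ 2 = ∑ k ∈ range n, (10 ^ i) ^ k := by
  rintro ⟨y, hy⟩
  have hx4 : (4:ℤ) ≤ (10:ℤ) ^ i := by
    calc (4:ℤ) ≤ 10 ^ 1 := by norm_num
    _ ≤ (10:ℤ) ^ i := pow_le_pow_right₀ (by norm_num) hi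
  have h2 : ¬ ∃ c : ℤ, c ^ 2 = 2 * (10:ℤ) ^ i := by
    rintro ⟨c, hc⟩
    apply not_sq_two_mul_pow10 i
    refine ⟨c.natAbs, ?_⟩
    have key : ((c.natAbs : ℤ)) ^ 2 = ((2 * 10 ^ i : ℕ) : ℤ) := by
      rw [← Int.abs_eq_natAbs, sq_abs, hc]; push_cast; ring
    exact_mod_cast key
  have h3 : ¬ ∃ c : ℤ, c ^ 2 = 3 * (10:ℤ) ^ i := by
    rintro ⟨c, hc⟩
    apply not_sq_three_mul_pow10 i
    refine ⟨c.natAbs, ?_⟩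
    have key : ((c.natAbs : ℤ)) ^ 2 = ((3 * 10 ^ i : ℕ) : ℤ) := by
      rw [← Int.abs_eq_natAbs, sq_abs, hc]; push_cast; ring
    exact_mod_cast key
  -- y is odd
  have hqeven : Even ((10:ℕ) ^ i) := Nat.even_pow.mpr ⟨⟨5, rfl⟩, by omega⟩
  have hsum_odd : Odd (∑ k ∈ range n, (10 ^ i) ^ k) := by
    obtain ⟨n', rfl⟩ : ∃ n', n = n' + 1 := ⟨n - 1, by omega⟩
    rw [geom_sum_succ]
    obtain ⟨v, hv⟩ := hqeven
    exact ⟨v * ∑ k ∈ range n', (10 ^ i) ^ k, by rw [hv]; ring⟩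
  have hyodd : Odd y := by
    rcases Nat.even_or_odd y with he | ho
    · exfalso
      rw [← hy] at hsum_odd
      rcases he with ⟨t, rfl⟩
      rcases hsum_odd with ⟨u, hu⟩
      have h4 : 4 * t ^ 2 = 2 * u + 1 := by rw [← hu]; ring
      omega
    · exact ho
  have hypos : 0 < y := by
    rcases Nat.eq_zero_or_pos y with h | h
    · exfalso
      subst h
      simp at hy
      rcases hsum_odd with ⟨u, hu⟩
      omega
    · exact h
  -- set up the Pell equation
  obtain ⟨u, rfl⟩ := hodd
  have hu1 : 1 ≤ u := by omega
  -- use an opaque variable for 10^i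
  obtain ⟨x, hxdef⟩ : ∃ x : ℤ, x = (10:ℤ) ^ i := ⟨_, rfl⟩
  rw [← hxdef] at hx4 h2 h3
  have hycast : ((y:ℤ)) ^ 2 = ∑ k ∈ range (2*u+1), x ^ k := by
    rw [hxdef]
    exact_mod_cast congrArg (Nat.cast : ℕ → ℤ) hy
  have hg := geom_sum_mul x (2*u+1)
  have hEq : (2 * x ^ (u+1)) ^ 2 = 4 * x * (x - 1) * (y:ℤ) ^ 2 + 4 * x := by
    have hxp : x ^ (2*u+1+1) = (x^(u+1))^2 := by rw [← pow_mul]; congr 1; ring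
    linear_combination (-(4*x*(x-1))) * hycast + (-(4*x)) * hg + (-4) * hxp
  have hYodd : Odd ((y:ℤ)) := by
    rcases hyodd with ⟨t, ht⟩
    exact ⟨(t:ℤ), by exact_mod_cast ht⟩
  have hXpos : 0 < 2 * x ^ (u+1) := by
    have : (0:ℤ) < x := by linarith
    positivity
  obtain ⟨P, hPodd, hPX⟩ := pell_descent x hx4 h2 h3 y (y:ℤ) (by omega)
    (by exact_mod_cast hypos) hYodd (2 * x ^ (u+1)) hXpos hEq
  -- P = x^u , but x^u is even
  have hPeq : P = x ^ u := by
    have h2x : (2 * x) ≠ 0 := by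
      have : (0:ℤ) < x := by linarith
      positivity
    apply mul_left_cancel₀ h2x
    rw [← hPX]; ring
  have hxep : Even (x ^ u) := by
    refine Int.even_pow.mpr ⟨?_, by omega⟩
    rw [hxdef]
    exact Int.even_pow.mpr ⟨⟨5, by norm_num⟩, by omega⟩
  rw [hPeq] at hPodd
  exact (Int.not_odd_iff_even.mpr hxep) hPodd

/-- geometric ℕ identity -/
lemma nat_geom (q c : ℕ) (hq : 1 ≤ q) :
    (q - 1) * ∑ k ∈ range c, q ^ k = q ^ c - 1 := by
  have h1 : 1 ≤ q ^ c := Nat.one_le_pow _ _ (by omega)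
  zify [hq, h1]
  linear_combination geom_sum_mul (q:ℤ) c

/-- A base-`10^d` repunit of length ≥ 2 is not a perfect square. -/
lemma not_sq_geom (d f : ℕ) (hd : 1 ≤ d) (hf : 2 ≤ f) :
    ¬ ∃ y : ℕ, y ^ 2 = ∑ k ∈ range f, (10 ^ d) ^ k := by
  rcases Nat.even_or_odd f with ⟨g, hfg⟩ | hodd
  · -- even length
    subst hfg
    rintro ⟨y, hy⟩
    have hq1 : 1 ≤ (10:ℕ) ^ d := Nat.one_le_pow _ _ (by norm_num)
    have hg1 : 1 ≤ g := by omega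
    have hqg1 : 1 ≤ (10:ℕ) ^ d ^ g := Nat.one_le_pow _ _ (by omega)
    have hq10 : (10:ℕ) ≤ 10 ^ d := by
      calc (10:ℕ) = 10 ^ 1 := by norm_num
      _ ≤ 10 ^ d := Nat.pow_le_pow_right (by norm_num) hd
    -- split the sum
    have hsplit : (∑ k ∈ range (g + g), (10 ^ d) ^ k)
        = (∑ k ∈ range g, (10 ^ d) ^ k) * ((10 ^ d) ^ g + 1) := by
      have hcast : ((∑ k ∈ range (g + g), (10 ^ d) ^ k : ℕ) : ℤ)
          = (((∑ k ∈ range g, (10 ^ d) ^ k) * ((10 ^ d) ^ g + 1) : ℕ) : ℤ) := by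
        push_cast
        have hcancel : (((10:ℤ) ^ d) - 1) ≠ 0 := by
          have : (10:ℤ) ≤ (10:ℤ) ^ d := by exact_mod_cast hq10
          linarith
        apply mul_right_cancel₀ hcancel
        rw [geom_sum_mul]
        linear_combination (-(((10:ℤ) ^ d) ^ g + 1)) * geom_sum_mul ((10:ℤ) ^ d) g
      exact_mod_cast hcast
    rw [hsplit] at hy
    -- coprimality
    have hqgeven : Even ((10 ^ d) ^ g) :=
      Nat.even_pow.mpr ⟨Nat.even_pow.mpr ⟨⟨5, rfl⟩, by omega⟩, by omega⟩
    have hqg1' : 1 ≤ (10 ^ d) ^ g := Nat.one_le_pow _ _ (by positivity)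
    have hAdvd : (∑ k ∈ range g, (10 ^ d) ^ k) ∣ (10 ^ d) ^ g - 1 :=
      ⟨10 ^ d - 1, by rw [← nat_geom (10 ^ d) g hq1]; ring⟩
    have hcop0 : Nat.Coprime ((10 ^ d) ^ g - 1) ((10 ^ d) ^ g + 1) := by
      have hdvd2 : Nat.gcd ((10 ^ d) ^ g - 1) ((10 ^ d) ^ g + 1) ∣ 2 := by
        have hsub := Nat.dvd_sub (Nat.gcd_dvd_right ((10 ^ d) ^ g - 1) ((10 ^ d) ^ g + 1))
          (Nat.gcd_dvd_left ((10 ^ d) ^ g - 1) ((10 ^ d) ^ g + 1))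
        rwa [show (10 ^ d) ^ g + 1 - ((10 ^ d) ^ g - 1) = 2 by omega] at hsub
      rcases (Nat.dvd_prime Nat.prime_two).mp hdvd2 with h | h
      · exact h
      · exfalso
        have h2dvd : 2 ∣ (10 ^ d) ^ g - 1 := h ▸ Nat.gcd_dvd_left _ _
        obtain ⟨v, hv⟩ := hqgeven
        obtain ⟨w, hw⟩ := h2dvd
        omega
    have hcop : Nat.Coprime (∑ k ∈ range g, (10 ^ d) ^ k) ((10 ^ d) ^ g + 1) :=
      Nat.Coprime.coprime_dvd_left hAdvd hcop0
    -- (10^d)^g + 1 is a square: contradiction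
    obtain ⟨b, hb⟩ : ∃ b : ℕ, (10 ^ d) ^ g + 1 = b ^ 2 :=
      exists_eq_pow_of_mul_eq_pow
        (show IsUnit (GCDMonoid.gcd ((10 ^ d) ^ g + 1) (∑ k ∈ range g, (10 ^ d) ^ k)) by
          exact Nat.isUnit_iff.mpr hcop.symm)
        (show ((10 ^ d) ^ g + 1) * (∑ k ∈ range g, (10 ^ d) ^ k) = y ^ 2 by
          rw [mul_comm]; exact hy.symm)
    apply not_sq_pow10_add_one (d * g) (Nat.mul_pos hd hg1)
    exact ⟨b, by rw [← hb, ← pow_mul]⟩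
  · -- odd length
    exact not_sq_geom_odd d f hd (by rcases hodd with ⟨u, hu⟩; omega) hodd

/-- gcd of `a^m - 1` and `a^n - 1`. -/
lemma gcd_pow_sub_one (a : ℕ) (ha : 2 ≤ a) :
    ∀ m n : ℕ, Nat.gcd (a ^ m - 1) (a ^ n - 1) = a ^ Nat.gcd m n - 1 := by
  intro m
  induction m using Nat.strong_induction_on with
  | _ m ih =>
    intro n
    rcases Nat.eq_zero_or_pos m with hm | hm
    · subst hm; simp
    · have hrec : Nat.gcd (a ^ m - 1) (a ^ n - 1) = Nat.gcd (a ^ m - 1) (a ^ (n % m) - 1) := by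
        obtain ⟨w, hw⟩ := Nat.sub_dvd_pow_sub_pow (a ^ m) 1 (n / m)
        simp only [one_pow] at hw
        have hA1 : 1 ≤ (a ^ m) ^ (n / m) := Nat.one_le_pow _ _ (by positivity)
        have hB1 : 1 ≤ a ^ (n % m) := Nat.one_le_pow _ _ (by omega)
        have hn1 : 1 ≤ a ^ n := Nat.one_le_pow _ _ (by omega)
        have hm1 : 1 ≤ a ^ m := Nat.one_le_pow _ _ (by omega)
        have hpow : a ^ n = (a ^ m) ^ (n / m) * a ^ (n % m) := by
          rw [← pow_mul, ← pow_add]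
          congr 1
          exact (Nat.div_add_mod n m).symm
        have hkey : a ^ n - 1 = (a ^ (n % m) - 1) + (a ^ (n % m) * w) * (a ^ m - 1) := by
          zify [hA1, hB1, hn1, hm1]
          have hw' : ((a:ℤ) ^ m) ^ (n / m) - 1 = (w : ℤ) * ((a:ℤ) ^ m - 1) := by
            zify [hm1, hA1] at hw
            linarith [hw]
          have hpow' : (a:ℤ) ^ n = ((a:ℤ) ^ m) ^ (n / m) * (a:ℤ) ^ (n % m) := by
            exact_mod_cast congrArg (Nat.cast : ℕ → ℤ) hpow
          linear_combination hpow' + (a:ℤ) ^ (n % m) * hw'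
        rw [hkey, Nat.gcd_add_mul_right_right]
      rw [hrec, Nat.gcd_comm, ih (n % m) (Nat.mod_lt n hm) m, Nat.gcd_rec m n]

theorem pow_sub_one_mul_not_square (m n : ℕ) (hn : 1 < n) (hmn : n < m) :
    ¬ ∃ s : ℕ, s ^ 2 = (10 ^ m - 1) * (10 ^ n - 1) := by
  rintro ⟨s, hs⟩
  have hnpos : 0 < n := by omega
  have hdpos : 0 < Nat.gcd m n := Nat.gcd_pos_of_pos_right m hnpos
  have hdm : Nat.gcd m n ∣ m := Nat.gcd_dvd_left m n
  have hdn : Nat.gcd m n ∣ n := Nat.gcd_dvd_right m n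
  have hdn' : Nat.gcd m n ≤ n := Nat.le_of_dvd hnpos hdn
  obtain ⟨d, hddef⟩ : ∃ d, d = Nat.gcd m n := ⟨_, rfl⟩
  rw [← hddef] at hdpos hdm hdn hdn'
  obtain ⟨f, hmf⟩ := hdm
  obtain ⟨e, hne⟩ := hdn
  have hf2 : 2 ≤ f := by
    rcases Nat.lt_or_ge f 2 with h | h
    · exfalso
      have : f = 0 ∨ f = 1 := by omega
      rcases this with h' | h' <;> subst h' <;> omega
    · exact h
  have hq1 : (1:ℕ) ≤ 10 ^ d := Nat.one_le_pow _ _ (by norm_num)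
  have hq10 : (10:ℕ) ≤ 10 ^ d := by
    calc (10:ℕ) = 10 ^ 1 := by norm_num
    _ ≤ 10 ^ d := Nat.pow_le_pow_right (by norm_num) hdpos
  have hAval : 10 ^ m - 1 = (10 ^ d - 1) * ∑ k ∈ range f, (10 ^ d) ^ k := by
    rw [nat_geom (10 ^ d) f hq1, ← pow_mul, ← hmf]
  have hBval : 10 ^ n - 1 = (10 ^ d - 1) * ∑ k ∈ range e, (10 ^ d) ^ k := by
    rw [nat_geom (10 ^ d) e hq1, ← pow_mul, ← hne]
  -- gcd is 10^d - 1, so the two geometric sums are coprime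
  have hgcd : Nat.gcd (10 ^ m - 1) (10 ^ n - 1) = 10 ^ d - 1 := by
    rw [gcd_pow_sub_one 10 (by norm_num) m n, ← hddef]
  have hcopAB : Nat.Coprime (∑ k ∈ range f, (10 ^ d) ^ k) (∑ k ∈ range e, (10 ^ d) ^ k) := by
    have h1 : Nat.gcd ((10 ^ d - 1) * ∑ k ∈ range f, (10 ^ d) ^ k)
        ((10 ^ d - 1) * ∑ k ∈ range e, (10 ^ d) ^ k)
        = (10 ^ d - 1) * Nat.gcd (∑ k ∈ range f, (10 ^ d) ^ k) (∑ k ∈ range e, (10 ^ d) ^ k) :=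
      Nat.gcd_mul_left _ _ _
    rw [← hAval, ← hBval, hgcd] at h1
    have hq1pos : 0 < 10 ^ d - 1 := by omega
    have h2 : (10 ^ d - 1) * 1 = (10 ^ d - 1) *
        Nat.gcd (∑ k ∈ range f, (10 ^ d) ^ k) (∑ k ∈ range e, (10 ^ d) ^ k) := by
      rw [mul_one]; exact h1
    exact (Nat.eq_of_mul_eq_mul_left hq1pos h2).symm
  -- s = (10^d - 1) * w with w² = A * B
  have hs2 : s ^ 2 = (10 ^ d - 1) ^ 2 *
      ((∑ k ∈ range f, (10 ^ d) ^ k) * ∑ k ∈ range e, (10 ^ d) ^ k) := by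
    rw [hs, hAval, hBval]; ring
  have hdvd : (10 ^ d - 1) ∣ s := by
    have h1 : (10 ^ d - 1) ^ 2 ∣ s ^ 2 := ⟨_, hs2⟩
    exact (Nat.pow_dvd_pow_iff (by norm_num)).mp h1
  obtain ⟨w, rfl⟩ := hdvd
  have hw2 : w ^ 2 = (∑ k ∈ range f, (10 ^ d) ^ k) * ∑ k ∈ range e, (10 ^ d) ^ k := by
    have hq2pos : 0 < (10 ^ d - 1) ^ 2 := by
      have : 0 < 10 ^ d - 1 := by omega
      positivity
    apply Nat.eq_of_mul_eq_mul_left hq2pos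
    rw [← hs2]; ring
  obtain ⟨a0, ha0⟩ : ∃ a0 : ℕ, (∑ k ∈ range f, (10 ^ d) ^ k) = a0 ^ 2 :=
    exists_eq_pow_of_mul_eq_pow
      (show IsUnit (GCDMonoid.gcd (∑ k ∈ range f, (10 ^ d) ^ k) (∑ k ∈ range e, (10 ^ d) ^ k)) by
        exact Nat.isUnit_iff.mpr hcopAB)
      hw2.symm
  exact not_sq_geom d f hdpos hf2 ⟨a0, ha0.symm⟩
end
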